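/- arXiv:2504.18319 — 5 statements merged into one kernel-verified Lean document; each statement's English description precedes it below -/
import Mathlib

section
/- Let A be a Noetherian integral domain and let B be a nonzero commutative A-algebra which, as an A-module, is finitely generated and torsion-free. Then for every associated prime 𝔭 of B (as a module over itself): the quotient ring B/𝔭 is torsion-free as an A-module, the structure homomorphism A → B/𝔭 is injective (and integral, since B/𝔭 is module-finite over A), and the Krull dimension of B/𝔭 equals the Krull dimension of A. -/
/-!
If `𝔭 = √(Ann b)` and `a • y ∈ 𝔭` with `a ≠ 0`, then `a ^ n • (y ^ n * b) = 0` for some `n`, so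
`y ^ n * b = 0` by torsion-freeness of `B`, i.e. `y ∈ 𝔭`. Thus `B ⧸ 𝔭` is a torsion-free, hence
faithful, module-finite `A`-algebra, and incomparability together with going up for the integral
extension `A ↪ B ⧸ 𝔭` identify the Krull dimensions.
-/

theorem ringKrullDim_le_of_isIntegral (R S : Type*) [CommRing R] [CommRing S] [Algebra R S]
    [Algebra.IsIntegral R S] : ringKrullDim S ≤ ringKrullDim R :=
  Order.krullDim_le_of_strictMono (PrimeSpectrum.comap (algebraMap R S))
    fun _ _ h ↦ Ideal.IsIntegral.comap_lt_comap (R := R) h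

theorem ringKrullDim_le_of_isIntegral_of_faithfulSMul (R S : Type*) [CommRing R] [CommRing S]
    [Algebra R S] [Algebra.IsIntegral R S] [FaithfulSMul R S] :
    ringKrullDim R ≤ ringKrullDim S := by
  refine iSup_le fun l ↦ ?_
  obtain ⟨P, _, _⟩ := Ideal.nonempty_primesOver (S := S) l.head.asIdeal
  obtain ⟨L, hL, -⟩ := Ideal.exists_ltSeries_of_hasGoingUp l P
  exact hL ▸ Order.LTSeries.length_le_krullDim L

theorem ringKrullDim_eq_of_isIntegral_of_faithfulSMul (R S : Type*) [CommRing R] [CommRing S]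
    [Algebra R S] [Algebra.IsIntegral R S] [FaithfulSMul R S] :
    ringKrullDim S = ringKrullDim R :=
  (ringKrullDim_le_of_isIntegral R S).antisymm (ringKrullDim_le_of_isIntegral_of_faithfulSMul R S)

theorem Module.IsTorsionFree.quotient_of_isAssociatedPrime {A B : Type*} [CommRing A]
    [IsDomain A] [CommRing B] [Algebra A B] [Module.IsTorsionFree A B] {𝔭 : Ideal B}
    (h𝔭 : IsAssociatedPrime 𝔭 B) : Module.IsTorsionFree A (B ⧸ 𝔭) := by
  obtain ⟨-, b, rfl⟩ := h𝔭
  refine .of_smul_eq_zero fun a x hax ↦ or_iff_not_imp_left.mpr fun ha ↦ ?_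
  obtain ⟨y, rfl⟩ := Ideal.Quotient.mk_surjective x
  rw [← Ideal.Quotient.mkₐ_eq_mk A, ← map_smul, Ideal.Quotient.mkₐ_eq_mk,
    Ideal.Quotient.eq_zero_iff_mem, Ideal.mem_radical_iff] at hax
  obtain ⟨n, hn⟩ := hax
  simp only [Submodule.mem_colon_singleton, Submodule.mem_bot, smul_pow, smul_assoc,
    smul_eq_zero, pow_eq_zero_iff', ha, false_and, false_or] at hn
  exact Ideal.Quotient.eq_zero_iff_mem.mpr
    (Ideal.mem_radical_iff.mpr ⟨n, by simpa [Submodule.mem_colon_singleton] using hn⟩)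

theorem stmt_0_general (A B : Type*) [CommRing A] [IsDomain A]
    [CommRing B] [Algebra A B] [Module.Finite A B]
    (htf : ∀ a : A, a ≠ 0 → ∀ x : B, a • x = 0 → x = 0)
    (𝔭 : Ideal B) (h𝔭 : 𝔭 ∈ associatedPrimes B B) :
    (∀ a : A, a ≠ 0 → ∀ x : B ⧸ 𝔭, a • x = 0 → x = 0) ∧
    Function.Injective (algebraMap A (B ⧸ 𝔭)) ∧
    Algebra.IsIntegral A (B ⧸ 𝔭) ∧
    ringKrullDim (B ⧸ 𝔭) = ringKrullDim A := by
  have : Module.IsTorsionFree A B :=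
    .of_smul_eq_zero fun a x hax ↦ or_iff_not_imp_left.mpr fun ha ↦ htf a ha x hax
  have : Module.IsTorsionFree A (B ⧸ 𝔭) := .quotient_of_isAssociatedPrime h𝔭
  have : Nontrivial (B ⧸ 𝔭) := Ideal.Quotient.nontrivial_iff.mpr h𝔭.ne_top
  have : Algebra.IsIntegral A (B ⧸ 𝔭) := .of_finite A _
  exact ⟨fun a ha x ↦ (smul_eq_zero_iff_right ha).mp, FaithfulSMul.algebraMap_injective A _,
    inferInstance, ringKrullDim_eq_of_isIntegral_of_faithfulSMul A _⟩

/-- Let `A` be a Noetherian integral domain and `B` a nonzero commutative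
`A`-algebra which is finitely generated and torsion-free as an `A`-module.  Then for every
associated prime `𝔭` of `B` (as a module over itself): `B ⧸ 𝔭` is torsion-free as an
`A`-module, the structure map `A → B ⧸ 𝔭` is injective and integral, and the Krull dimension
of `B ⧸ 𝔭` equals the Krull dimension of `A`. -/
theorem stmt_0 (A B : Type*) [CommRing A] [IsDomain A] [IsNoetherianRing A]
    [CommRing B] [Nontrivial B] [Algebra A B] [Module.Finite A B]
    (htf : ∀ a : A, a ≠ 0 → ∀ x : B, a • x = 0 → x = 0)
    (𝔭 : Ideal B) (h𝔭 : 𝔭 ∈ associatedPrimes B B) :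
    (∀ a : A, a ≠ 0 → ∀ x : B ⧸ 𝔭, a • x = 0 → x = 0) ∧
    Function.Injective (algebraMap A (B ⧸ 𝔭)) ∧
    Algebra.IsIntegral A (B ⧸ 𝔭) ∧
    ringKrullDim (B ⧸ 𝔭) = ringKrullDim A :=
  stmt_0_general A B htf 𝔭 h𝔭
end

section
/- Let A be a Noetherian integral domain of finite Krull dimension, M a nonzero finitely generated torsion-free A-module, and B a commutative A-subalgebra of the endomorphism algebra End_A(M). Then B is finitely generated and torsion-free as an A-module; consequently B is equidimensional of Krull dimension equal to that of A (every quotient of B by a minimal prime has Krull dimension equal to dim A) and B has no embedded primes (every associated prime of the B-module B is a minimal prime). -/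
/-!
Since `M` is finitely generated over the Noetherian ring `A`, so is `End_A(M)`, hence its
submodule `B`; and `B` inherits torsion-freeness from `M`. Thus `B` is integral over `A` and
every nonzero `a ∈ A` is a nonzerodivisor of `B`. Minimal and associated primes of `B` consist of
zerodivisors, so they contract to `0` in `A`. A prime contracting to `0` is minimal by
incomparability, and a minimal prime `𝔮` gives an injective integral extension `A → B ⧸ 𝔮`,
which has the same Krull dimension by going up.
-/

open Module

theorem ringKrullDim_eq_of_isIntegral_of_injective {A C : Type*} [CommRing A] [CommRing C]
    [Algebra A C] [Algebra.IsIntegral A C] (hinj : Function.Injective (algebraMap A C)) :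
    ringKrullDim C = ringKrullDim A := by
  refine le_antisymm
    (Order.krullDim_le_of_strictMono (PrimeSpectrum.comap (algebraMap A C))
      fun _ _ h ↦ Ideal.IsIntegral.comap_lt_comap (R := A) h) (iSup_le fun l ↦ ?_)
  have := l.head.isPrime
  obtain ⟨P, -, hP, hPl⟩ := Ideal.exists_ideal_over_prime_of_isIntegral l.head.asIdeal ⊥
    (by rw [Ideal.comap_bot_of_injective _ hinj]; exact bot_le)
  have : P.LiesOver l.head.asIdeal := ⟨hPl.symm⟩
  obtain ⟨L, hL, -⟩ := Ideal.exists_ltSeries_of_hasGoingUp l P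
  exact hL ▸ Order.LTSeries.length_le_krullDim L

theorem Ideal.mem_minimalPrimes_of_comap_eq_bot {A B : Type*} [CommRing A] [CommRing B]
    [Algebra A B] [Algebra.IsIntegral A B] {P : Ideal B} [P.IsPrime]
    (hP : P.comap (algebraMap A B) = ⊥) : P ∈ minimalPrimes B := by
  simpa [Ideal.under, hP] using Ideal.IsIntegral.mem_minimalPrimes_map_under (R := A) P

section TorsionFree

variable {A B : Type*} [CommRing A] [IsDomain A] [CommRing B] [Algebra A B]
  [IsTorsionFree A B]

theorem algebraMap_mem_nonZeroDivisors_of_ne_zero {a : A} (ha : a ≠ 0) :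
    algebraMap A B a ∈ nonZeroDivisors B :=
  mem_nonZeroDivisors_iff_right.2 fun x hx ↦ by
    rwa [mul_comm, ← Algebra.smul_def, smul_eq_zero_iff_right ha] at hx

theorem Ideal.comap_eq_bot_of_disjoint_nonZeroDivisors {P : Ideal B}
    (hP : Disjoint (P : Set B) (nonZeroDivisors B)) : P.comap (algebraMap A B) = ⊥ :=
  (Submodule.eq_bot_iff _).2 fun _ ha ↦ by_contra fun ha0 ↦
    Set.disjoint_left.1 hP ha (algebraMap_mem_nonZeroDivisors_of_ne_zero ha0)

theorem ringKrullDim_quotient_eq_of_mem_minimalPrimes [Algebra.IsIntegral A B] {𝔮 : Ideal B}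
    (h𝔮 : 𝔮 ∈ minimalPrimes B) : ringKrullDim (B ⧸ 𝔮) = ringKrullDim A := by
  have h𝔮A : 𝔮.comap (algebraMap A B) = ⊥ :=
    Ideal.comap_eq_bot_of_disjoint_nonZeroDivisors
      (Ideal.disjoint_nonZeroDivisors_of_mem_minimalPrimes h𝔮)
  refine ringKrullDim_eq_of_isIntegral_of_injective ((injective_iff_map_eq_zero _).2 fun a ha ↦ ?_)
  rw [IsScalarTower.algebraMap_apply A B, Ideal.Quotient.algebraMap_eq,
    Ideal.Quotient.eq_zero_iff_mem, ← Ideal.mem_comap, h𝔮A] at ha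
  exact (Submodule.mem_bot A).1 ha

theorem mem_minimalPrimes_of_mem_associatedPrimes [Algebra.IsIntegral A B] [IsNoetherianRing B]
    {𝔭 : Ideal B} (h𝔭 : 𝔭 ∈ associatedPrimes B B) : 𝔭 ∈ minimalPrimes B := by
  have := h𝔭.isPrime
  refine Ideal.mem_minimalPrimes_of_comap_eq_bot (A := A)
    (Ideal.comap_eq_bot_of_disjoint_nonZeroDivisors (Set.subset_compl_iff_disjoint_right.1 ?_))
  rw [← biUnion_associatedPrimes_eq_compl_nonZeroDivisors]
  exact Set.subset_biUnion_of_mem (u := fun p : Ideal B ↦ (p : Set B)) h𝔭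

end TorsionFree

theorem stmt_2_general (A : Type*) [CommRing A] [IsDomain A] [IsNoetherianRing A]
    (M : Type*) [AddCommGroup M] [Module A M] [Module.Finite A M]
    (htfM : ∀ a : A, a ≠ 0 → ∀ x : M, a • x = 0 → x = 0)
    (B : Type*) [CommRing B] [Algebra A B]
    (f : B →ₐ[A] Module.End A M) (hf : Function.Injective f) :
    Module.Finite A B ∧
    (∀ a : A, a ≠ 0 → ∀ x : B, a • x = 0 → x = 0) ∧
    (∀ 𝔮 ∈ minimalPrimes B, ringKrullDim (B ⧸ 𝔮) = ringKrullDim A) ∧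
    (∀ 𝔭 ∈ associatedPrimes B B, 𝔭 ∈ minimalPrimes B) := by
  have : IsTorsionFree A M :=
    .of_smul_eq_zero fun a x h ↦ or_iff_not_imp_left.2 fun ha ↦ htfM a ha x h
  have : IsTorsionFree A B := hf.moduleIsTorsionFree f (map_smul f)
  have : Module.Finite A B := .of_injective f.toLinearMap hf
  have : IsNoetherianRing B := .of_finite A B
  have : Algebra.IsIntegral A B := .of_finite A B
  exact ⟨‹_›, fun a ha x ↦ (smul_eq_zero_iff_right ha).1,
    fun _ ↦ ringKrullDim_quotient_eq_of_mem_minimalPrimes,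
    fun _ ↦ mem_minimalPrimes_of_mem_associatedPrimes (A := A)⟩

/-- Let `A` be a Noetherian integral domain of finite Krull dimension,
`M` a nonzero finitely generated torsion-free `A`-module, and `B` a commutative
`A`-subalgebra of `End_A(M)` (formalized as a commutative `A`-algebra together with an
injective `A`-algebra homomorphism into `Module.End A M`).  Then `B` is finitely generated
and torsion-free as an `A`-module; consequently `B` is equidimensional of Krull dimension
equal to that of `A` and has no embedded primes. -/
theorem stmt_2 (A : Type*) [CommRing A] [IsDomain A] [IsNoetherianRing A]
    (hA : ringKrullDim A < ⊤)
    (M : Type*) [AddCommGroup M] [Module A M] [Nontrivial M] [Module.Finite A M]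
    (htfM : ∀ a : A, a ≠ 0 → ∀ x : M, a • x = 0 → x = 0)
    (B : Type*) [CommRing B] [Algebra A B]
    (f : B →ₐ[A] Module.End A M) (hf : Function.Injective f) :
    Module.Finite A B ∧
    (∀ a : A, a ≠ 0 → ∀ x : B, a • x = 0 → x = 0) ∧
    (∀ 𝔮 ∈ minimalPrimes B, ringKrullDim (B ⧸ 𝔮) = ringKrullDim A) ∧
    (∀ 𝔭 ∈ associatedPrimes B B, 𝔭 ∈ minimalPrimes B) :=
  stmt_2_general A M htfM B f hf
end

section
/- Let R be a commutative ring, a, b natural numbers, m = a + b, let σ be a permutation of {1,…,m} with permutation matrix P_σ, and let n be an upper unitriangular m×m matrix over R. Then: (i) the top-left a×a block of P_σ n P_σ⁻¹ has determinant 1; and (ii) there exist an invertible block lower-triangular matrix p̄ ∈ P̄ and a block upper-unipotent matrix u ∈ U such that P_σ n P_σ⁻¹ = p̄ u. In particular, P̄ P_σ N ⊆ P̄ U P_σ as subsets of GL_m(R). -/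
/-- The permutation matrix `P_σ`, with `(P_σ)_{ij} = 1` iff `i = σ(j)`. -/
def permMat₃ (R : Type*) [CommRing R] {m : ℕ} (σ : Equiv.Perm (Fin m)) :
    Matrix (Fin m) (Fin m) R :=
  Matrix.of fun i j => if i = σ j then 1 else 0


section helpers
variable {R : Type*} [CommRing R] {m : ℕ}

lemma permMat_mul (σ : Equiv.Perm (Fin m)) (N : Matrix (Fin m) (Fin m) R) :
    permMat₃ R σ * N = N.submatrix σ.symm id := by
  ext i j
  simp only [Matrix.mul_apply, permMat₃, Matrix.of_apply, Matrix.submatrix_apply, id,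
    ← Equiv.symm_apply_eq, ite_mul, one_mul, zero_mul]
  simp [Finset.sum_ite_eq]

lemma mul_permMat (N : Matrix (Fin m) (Fin m) R) (σ : Equiv.Perm (Fin m)) :
    N * permMat₃ R σ = N.submatrix id σ := by
  ext i j
  simp only [Matrix.mul_apply, permMat₃, Matrix.of_apply, Matrix.submatrix_apply, id,
    mul_ite, mul_one, mul_zero]
  simp [Finset.sum_ite_eq']

lemma conjMat (σ : Equiv.Perm (Fin m)) (n : Matrix (Fin m) (Fin m) R) :
    permMat₃ R σ * n * permMat₃ R σ⁻¹ = n.submatrix σ.symm σ.symm := by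
  rw [mul_permMat, permMat_mul]
  rfl

lemma permMat_inv_mul (σ : Equiv.Perm (Fin m)) :
    permMat₃ R σ⁻¹ * permMat₃ R σ = 1 := by
  rw [permMat_mul]
  ext i j
  simp [permMat₃, Matrix.one_apply, Equiv.Perm.inv_def, Equiv.apply_eq_iff_eq]

end helpers

section detblock
variable {R : Type*} [CommRing R] {m a : ℕ}

lemma det_block (n : Matrix (Fin m) (Fin m) R)
    (hdiag : ∀ i, n i i = 1)
    (hlow : ∀ i j : Fin m, (j : ℕ) < (i : ℕ) → n i j = 0)
    (f : Fin a → Fin m) (hf : Function.Injective f) :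
    (n.submatrix f f).det = 1 := by
  classical
  set s : Finset (Fin m) := Finset.univ.image f with hs_def
  have hs : s.card = a := by
    rw [hs_def, Finset.card_image_of_injective _ hf, Finset.card_univ, Fintype.card_fin]
  set mono := s.orderIsoOfFin hs with hmono
  set g : Fin a → Fin m := fun k => (mono k : Fin m) with hg_def
  have hg : StrictMono g := fun i j h => by
    simpa [hg_def] using (mono.strictMono h)
  have hmem : ∀ j, f j ∈ s := fun j => Finset.mem_image_of_mem f (Finset.mem_univ j)
  set e : Fin a → Fin a := fun j => mono.symm ⟨f j, hmem j⟩ with he_def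
  have he : ∀ j, g (e j) = f j := fun j => by
    simp [hg_def, he_def]
  have hei : Function.Injective e := fun i j h => by
    apply hf
    rw [← he i, ← he j, h]
  have heb : Function.Bijective e := Finite.injective_iff_bijective.mp hei
  set eE : Equiv.Perm (Fin a) := Equiv.ofBijective e heb with heE
  have hsub : n.submatrix f f = (n.submatrix g g).submatrix eE eE := by
    ext i j
    simp [heE, Equiv.ofBijective_apply, he]
  rw [hsub, Matrix.det_submatrix_equiv_self,
    Matrix.det_of_upperTriangular (M := n.submatrix g g)
      (fun i j h => hlow (g i) (g j) (hg h))]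
  simp [hdiag]

end detblock

section lu
variable {R : Type*} [CommRing R] {a b : ℕ}

lemma symm_cases (i : Fin (a + b)) :
    (∃ x : Fin a, finSumFinEquiv.symm i = Sum.inl x ∧ (x : ℕ) = (i : ℕ)) ∨
    (∃ y : Fin b, finSumFinEquiv.symm i = Sum.inr y ∧ (i : ℕ) = a + (y : ℕ)) := by
  rcases h : finSumFinEquiv.symm i with x | y
  · left
    refine ⟨x, rfl, ?_⟩
    have := congrArg finSumFinEquiv h
    rw [Equiv.apply_symm_apply, finSumFinEquiv_apply_left] at this
    rw [this]
    rfl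
  · right
    refine ⟨y, rfl, ?_⟩
    have := congrArg finSumFinEquiv h
    rw [Equiv.apply_symm_apply, finSumFinEquiv_apply_right] at this
    rw [this]
    rfl

lemma lu_decomp (M : Matrix (Fin (a + b)) (Fin (a + b)) R)
    (hAdet : IsUnit ((M.submatrix (Fin.castAdd b) (Fin.castAdd b)).det))
    (hMdet : IsUnit M.det) :
    ∃ p u : Matrix (Fin (a + b)) (Fin (a + b)) R,
      IsUnit p ∧ (∀ i j : Fin (a + b), (i : ℕ) < a → a ≤ (j : ℕ) → p i j = 0) ∧
      (∀ i, u i i = 1) ∧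
      (∀ i j : Fin (a + b), i ≠ j → ¬((i : ℕ) < a ∧ a ≤ (j : ℕ)) → u i j = 0) ∧
      M = p * u := by
  classical
  set A := M.submatrix (Fin.castAdd b) (Fin.castAdd b) with hA
  set B := M.submatrix (Fin.castAdd b) (Fin.natAdd a) with hB
  set C := M.submatrix (Fin.natAdd a) (Fin.castAdd b) with hC
  set D := M.submatrix (Fin.natAdd a) (Fin.natAdd a) with hD
  have hM' : M.submatrix finSumFinEquiv finSumFinEquiv = Matrix.fromBlocks A B C D := by
    ext (i | i) (j | j) <;> simp [hA, hB, hC, hD]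
  set u' : Matrix (Fin a ⊕ Fin b) (Fin a ⊕ Fin b) R :=
    Matrix.fromBlocks 1 (A⁻¹ * B) 0 1 with hu'
  set p' : Matrix (Fin a ⊕ Fin b) (Fin a ⊕ Fin b) R :=
    Matrix.fromBlocks A 0 C (D - C * (A⁻¹ * B)) with hp'
  have hAA : A * A⁻¹ = 1 := Matrix.mul_nonsing_inv A hAdet
  have h12 : A * (A⁻¹ * B) = B := by rw [← Matrix.mul_assoc, hAA, Matrix.one_mul]
  have hpu : p' * u' = M.submatrix finSumFinEquiv finSumFinEquiv := by
    rw [hp', hu', Matrix.fromBlocks_multiply, h12, hM']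
    simp [add_sub_cancel]
  refine ⟨p'.submatrix finSumFinEquiv.symm finSumFinEquiv.symm,
    u'.submatrix finSumFinEquiv.symm finSumFinEquiv.symm, ?_, ?_, ?_, ?_, ?_⟩
  · rw [Matrix.isUnit_iff_isUnit_det, Matrix.det_submatrix_equiv_self]
    have hdu' : u'.det = 1 := by
      rw [hu', Matrix.det_fromBlocks_zero₂₁]
      simp
    have : p'.det * u'.det = M.det := by
      rw [← Matrix.det_mul, hpu, Matrix.det_submatrix_equiv_self]
    rw [hdu', mul_one] at this
    rw [this]; exact hMdet
  · intro i j hi hj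
    rcases symm_cases i with ⟨x, hx, hx'⟩ | ⟨y, hy, hy'⟩
    · rcases symm_cases j with ⟨x', hx2, hx2'⟩ | ⟨y', hy2, hy2'⟩
      · omega
      · simp [Matrix.submatrix_apply, hx, hy2, hp']
    · omega
  · intro i
    rcases symm_cases i with ⟨x, hx, _⟩ | ⟨y, hy, _⟩
    · simp [Matrix.submatrix_apply, hx, hu', Matrix.one_apply]
    · simp [Matrix.submatrix_apply, hy, hu', Matrix.one_apply]
  · intro i j hij hblk
    have hne : finSumFinEquiv.symm i ≠ finSumFinEquiv.symm j := fun h =>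
      hij (finSumFinEquiv.symm.injective h)
    rcases symm_cases i with ⟨x, hx, hx'⟩ | ⟨y, hy, hy'⟩ <;>
      rcases symm_cases j with ⟨x', hx2, hx2'⟩ | ⟨y', hy2, hy2'⟩
    · rw [hx, hx2] at hne
      have hxx : x ≠ x' := fun h => hne (by rw [h])
      simp [Matrix.submatrix_apply, hx, hx2, hu', Matrix.one_apply, hxx]
    · exact absurd ⟨by omega, by omega⟩ hblk
    · simp [Matrix.submatrix_apply, hx2, hy, hu']
    · rw [hy, hy2] at hne
      have hyy : y ≠ y' := fun h => hne (by rw [h])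
      simp [Matrix.submatrix_apply, hy, hy2, hu', Matrix.one_apply, hyy]
  · rw [Matrix.submatrix_mul_equiv, hpu]
    simp
end lu

/-- Over a commutative ring `R`, with block sizes `a`, `b` and
`m = a + b`, for a permutation `σ` of `Fin (a+b)` and an upper unitriangular matrix `n`:
(i) the top-left `a × a` block of `P_σ n P_σ⁻¹` has determinant `1`;
(ii) `P_σ n P_σ⁻¹ = p̄ u` with `p̄` invertible block lower-triangular and `u` block
upper-unipotent; in particular `P̄ P_σ N ⊆ P̄ U P_σ`. -/
theorem stmt_3 (R : Type*) [CommRing R] (a b : ℕ) (σ : Equiv.Perm (Fin (a + b)))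
    (n : Matrix (Fin (a + b)) (Fin (a + b)) R)
    (hdiag : ∀ i, n i i = 1)
    (hlow : ∀ i j : Fin (a + b), (j : ℕ) < (i : ℕ) → n i j = 0) :
    (((permMat₃ R σ * n * permMat₃ R σ⁻¹).submatrix (Fin.castAdd b) (Fin.castAdd b)).det = 1) ∧
    (∃ p u : Matrix (Fin (a + b)) (Fin (a + b)) R,
        IsUnit p ∧ (∀ i j : Fin (a + b), (i : ℕ) < a → a ≤ (j : ℕ) → p i j = 0) ∧
        (∀ i, u i i = 1) ∧
        (∀ i j : Fin (a + b), i ≠ j → ¬((i : ℕ) < a ∧ a ≤ (j : ℕ)) → u i j = 0) ∧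
        permMat₃ R σ * n * permMat₃ R σ⁻¹ = p * u) ∧
    (∀ p₀ n₀ : Matrix (Fin (a + b)) (Fin (a + b)) R,
        IsUnit p₀ → (∀ i j : Fin (a + b), (i : ℕ) < a → a ≤ (j : ℕ) → p₀ i j = 0) →
        (∀ i, n₀ i i = 1) → (∀ i j : Fin (a + b), (j : ℕ) < (i : ℕ) → n₀ i j = 0) →
        ∃ p₁ u : Matrix (Fin (a + b)) (Fin (a + b)) R,
          IsUnit p₁ ∧ (∀ i j : Fin (a + b), (i : ℕ) < a → a ≤ (j : ℕ) → p₁ i j = 0) ∧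
          (∀ i, u i i = 1) ∧
          (∀ i j : Fin (a + b), i ≠ j → ¬((i : ℕ) < a ∧ a ≤ (j : ℕ)) → u i j = 0) ∧
          p₀ * permMat₃ R σ * n₀ = p₁ * u * permMat₃ R σ) := by
  have hcast : Function.Injective (Fin.castAdd b : Fin a → Fin (a + b)) :=
    fun i j h => Fin.ext (by simpa using congrArg Fin.val h)
  -- generic facts for any unitriangular matrix n'
  have hdetA : ∀ n' : Matrix (Fin (a + b)) (Fin (a + b)) R, (∀ i, n' i i = 1) →
      (∀ i j : Fin (a + b), (j : ℕ) < (i : ℕ) → n' i j = 0) →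
      ((permMat₃ R σ * n' * permMat₃ R σ⁻¹).submatrix (Fin.castAdd b) (Fin.castAdd b)).det
        = 1 := by
    intro n' hd hl
    rw [conjMat, Matrix.submatrix_submatrix]
    exact det_block n' hd hl _ (σ.symm.injective.comp hcast)
  have hdetM : ∀ n' : Matrix (Fin (a + b)) (Fin (a + b)) R, (∀ i, n' i i = 1) →
      (∀ i j : Fin (a + b), (j : ℕ) < (i : ℕ) → n' i j = 0) →
      (permMat₃ R σ * n' * permMat₃ R σ⁻¹).det = 1 := by
    intro n' hd hl
    rw [conjMat, Matrix.det_submatrix_equiv_self,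
      Matrix.det_of_upperTriangular (fun i j h => hl i j h)]
    simp [hd]
  have hlu : ∀ n' : Matrix (Fin (a + b)) (Fin (a + b)) R, (∀ i, n' i i = 1) →
      (∀ i j : Fin (a + b), (j : ℕ) < (i : ℕ) → n' i j = 0) →
      ∃ p u : Matrix (Fin (a + b)) (Fin (a + b)) R,
        IsUnit p ∧ (∀ i j : Fin (a + b), (i : ℕ) < a → a ≤ (j : ℕ) → p i j = 0) ∧
        (∀ i, u i i = 1) ∧
        (∀ i j : Fin (a + b), i ≠ j → ¬((i : ℕ) < a ∧ a ≤ (j : ℕ)) → u i j = 0) ∧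
        permMat₃ R σ * n' * permMat₃ R σ⁻¹ = p * u := by
    intro n' hd hl
    exact lu_decomp _ (by rw [hdetA n' hd hl]; exact isUnit_one)
      (by rw [hdetM n' hd hl]; exact isUnit_one)
  refine ⟨hdetA n hdiag hlow, hlu n hdiag hlow, ?_⟩
  intro p₀ n₀ hp₀ hp₀blk hn₀d hn₀l
  obtain ⟨p, u, hp, hpblk, hud, huo, hMpu⟩ := hlu n₀ hn₀d hn₀l
  refine ⟨p₀ * p, u, hp₀.mul hp, ?_, hud, huo, ?_⟩
  · intro i j hi hj
    rw [Matrix.mul_apply]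
    apply Finset.sum_eq_zero
    intro k _
    by_cases hk : (k : ℕ) < a
    · rw [hpblk k j hk hj, mul_zero]
    · rw [hp₀blk i k hi (le_of_not_gt hk), zero_mul]
  · have key : permMat₃ R σ * n₀ = p * u * permMat₃ R σ := by
      calc permMat₃ R σ * n₀
          = permMat₃ R σ * n₀ * (permMat₃ R σ⁻¹ * permMat₃ R σ) := by
            rw [permMat_inv_mul, Matrix.mul_one]
        _ = (permMat₃ R σ * n₀ * permMat₃ R σ⁻¹) * permMat₃ R σ := by
            simp only [Matrix.mul_assoc]
        _ = p * u * permMat₃ R σ := by rw [hMpu]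
    rw [Matrix.mul_assoc, key]
    simp only [Matrix.mul_assoc]
end

section
/- Let K be a field, a, b natural numbers, m = a + b, and let σ be a permutation of {1,…,m} such that σ⁻¹ is strictly increasing on {1,…,a} and on {a+1,…,m}. Then the multiplication map (x, y) ↦ x·y from (P̄ P_σ N) × (P_σ⁻¹ U P_σ ∩ N̄) to GL_m(K) is injective, and its image is exactly the subset P̄ U P_σ of GL_m(K). -/
/-- The permutation matrix `P_σ`, with `(P_σ)_{ij} = 1` iff `i = σ(j)`. -/
def permMat₄ (K : Type*) [Field K] {m : ℕ} (σ : Equiv.Perm (Fin m)) :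
    Matrix (Fin m) (Fin m) K :=
  Matrix.of fun i j => if i = σ j then 1 else 0

/-- Invertible block lower-triangular matrices: `g_{ij} = 0` whenever `i` is in the first
block and `j` in the second. -/
def IsBlockLower₄ (K : Type*) [Field K] (a b : ℕ)
    (p : Matrix (Fin (a + b)) (Fin (a + b)) K) : Prop :=
  IsUnit p ∧ ∀ i j : Fin (a + b), (i : ℕ) < a → a ≤ (j : ℕ) → p i j = 0

/-- Upper unitriangular matrices. -/
def IsUpperUnitri₄ (K : Type*) [Field K] {m : ℕ} (n : Matrix (Fin m) (Fin m) K) : Prop :=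
  (∀ i, n i i = 1) ∧ ∀ i j : Fin m, (j : ℕ) < (i : ℕ) → n i j = 0

/-- Lower unitriangular matrices. -/
def IsLowerUnitri₄ (K : Type*) [Field K] {m : ℕ} (n : Matrix (Fin m) (Fin m) K) : Prop :=
  (∀ i, n i i = 1) ∧ ∀ i j : Fin m, (i : ℕ) < (j : ℕ) → n i j = 0

/-- Block upper-unipotent matrices `1 + X` with `X_{ij} = 0` unless `i` is in the first
block and `j` in the second. -/
def IsBlockUpperUnip₄ (K : Type*) [Field K] (a b : ℕ)
    (u : Matrix (Fin (a + b)) (Fin (a + b)) K) : Prop :=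
  (∀ i, u i i = 1) ∧
    ∀ i j : Fin (a + b), i ≠ j → ¬((i : ℕ) < a ∧ a ≤ (j : ℕ)) → u i j = 0


/-!
Write `w = P_σ` and `i ≺ j` for `σ⁻¹ i < σ⁻¹ j`. Conjugating `n ∈ N` by `w` gives a
`≺`-unitriangular matrix, and block elimination factors it as `q (1 + V)` with `q ∈ P̄` and
`1 + V ∈ U`, where `V` is again `≺`-strictly upper triangular. With `u = 1 + X` this gives
`p w n · w⁻¹ u w = (p q) (1 + (V + X)) w`, and `w⁻¹ u w ∈ N̄` says that `X` is `≺`-strictly lower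
triangular. As `P̄ ∩ U = 1`, the product determines `V + X`, hence `X` (the supports are
disjoint), hence both factors. Conversely `p (1 + X) w` is reached by splitting `X` into its
`≺`-upper and `≺`-lower parts.
-/

open Matrix

section Support

variable {n R : Type*}

def Matrix.IsSupportedOn [Zero R] (X : Matrix n n R) (r : n → n → Prop) : Prop :=
  ∀ i j, X i j ≠ 0 → r i j

open scoped Classical in
noncomputable def Matrix.restrict [Zero R] (r : n → n → Prop) (X : Matrix n n R) :
    Matrix n n R :=
  of fun i j => if r i j then X i j else 0

namespace Matrix.IsSupportedOn

variable {r s : n → n → Prop}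

theorem apply_eq_zero [Zero R] {X : Matrix n n R} (hX : X.IsSupportedOn r) {i j : n}
    (hij : ¬ r i j) : X i j = 0 :=
  not_imp_comm.1 (hX i j) hij

theorem mono [Zero R] {X : Matrix n n R} (hX : X.IsSupportedOn r) (hrs : ∀ i j, r i j → s i j) :
    X.IsSupportedOn s :=
  fun i j h => hrs i j (hX i j h)

theorem add [AddZeroClass R] {X Y : Matrix n n R} (hX : X.IsSupportedOn r)
    (hY : Y.IsSupportedOn r) : (X + Y).IsSupportedOn r := by
  intro i j h
  by_contra hij
  simp [hX.apply_eq_zero hij, hY.apply_eq_zero hij] at h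

theorem neg [SubtractionMonoid R] {X : Matrix n n R} (hX : X.IsSupportedOn r) :
    (-X).IsSupportedOn r :=
  fun i j h => hX i j (by simpa using h)

theorem mul_eq_zero [Fintype n] [NonUnitalNonAssocSemiring R] {X Y : Matrix n n R}
    (hX : X.IsSupportedOn r) (hY : Y.IsSupportedOn s) (hrs : ∀ i j k, r i j → ¬ s j k) :
    X * Y = 0 := by
  ext i k
  refine Finset.sum_eq_zero fun j _ => ?_
  dsimp only
  by_cases hij : r i j
  · rw [hY.apply_eq_zero (hrs i j k hij), mul_zero]
  · rw [hX.apply_eq_zero hij, zero_mul]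

theorem eq_of_add_eq [AddGroup R] {V₁ V₂ X₁ X₂ : Matrix n n R} (hV₁ : V₁.IsSupportedOn r)
    (hV₂ : V₂.IsSupportedOn r) (hX₁ : X₁.IsSupportedOn s) (hX₂ : X₂.IsSupportedOn s)
    (hrs : ∀ i j, r i j → ¬ s i j) (h : V₁ + X₁ = V₂ + X₂) : X₁ = X₂ := by
  ext i j
  have hij := congr_fun₂ h i j
  by_cases hs : s i j
  · simpa [hV₁.apply_eq_zero (hrs i j · hs), hV₂.apply_eq_zero (hrs i j · hs)] using hij
  · rw [hX₁.apply_eq_zero hs, hX₂.apply_eq_zero hs]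

end Matrix.IsSupportedOn

theorem Matrix.isSupportedOn_submatrix_iff [Zero R] {X : Matrix n n R} {r : n → n → Prop}
    (e : n ≃ n) :
    (X.submatrix e e).IsSupportedOn r ↔ X.IsSupportedOn fun i j => r (e.symm i) (e.symm j) :=
  ⟨fun h i j hX => h _ _ (by simpa using hX), fun h i j hX => by simpa using h _ _ hX⟩

theorem Matrix.isSupportedOn_restrict [Zero R] {X : Matrix n n R} {r s : n → n → Prop}
    (hX : X.IsSupportedOn s) : (X.restrict r).IsSupportedOn fun i j => r i j ∧ s i j := by
  intro i j h
  by_cases hr : r i j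
  · exact ⟨hr, hX i j (by simpa [restrict, hr] using h)⟩
  · simp [restrict, hr] at h

theorem Matrix.restrict_add_restrict_not [AddZeroClass R] (X : Matrix n n R) (r : n → n → Prop) :
    X.restrict r + X.restrict (fun i j => ¬ r i j) = X := by
  ext i j
  by_cases hr : r i j <;> simp [restrict, hr]

theorem Matrix.blockTriangular_one_add [DecidableEq n] [AddZeroClass R] [One R] {α : Type*}
    [Preorder α] {f : n → α} {Y : Matrix n n R} (hY : Y.IsSupportedOn fun i j => f i < f j) :
    (1 + Y).BlockTriangular f := by
  intro i j hji
  have hij : i ≠ j := by rintro rfl; exact lt_irrefl _ hji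
  rw [add_apply, one_apply_ne hij, hY.apply_eq_zero (lt_asymm hji), add_zero]

theorem Matrix.det_one_add_of_isSupportedOn [Fintype n] [DecidableEq n] [LinearOrder n]
    [CommRing R] (σ : Equiv.Perm n) {Y : Matrix n n R}
    (hY : Y.IsSupportedOn fun i j => σ i < σ j) :
    (1 + Y).det = 1 := by
  have hT : ((1 + Y).submatrix ⇑σ⁻¹ ⇑σ⁻¹).IsUpperTriangular := by
    simpa only [Equiv.Perm.coe_inv, Equiv.self_comp_symm] using
      (blockTriangular_one_add hY).submatrix (f := ⇑σ⁻¹)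
  rw [← det_submatrix_equiv_self σ⁻¹, det_of_isUpperTriangular hT]
  simp [hY.apply_eq_zero (lt_irrefl _)]

end Support

section Unitriangular

variable {K : Type*} [Field K] {m : ℕ}

theorem isUpperUnitri₄_one_add_iff {Y : Matrix (Fin m) (Fin m) K} :
    IsUpperUnitri₄ K (1 + Y) ↔ Y.IsSupportedOn (· < ·) := by
  refine ⟨fun h i j hY => ?_, fun h => ⟨fun i => ?_, fun i j hji => ?_⟩⟩
  · rcases lt_trichotomy i j with hij | rfl | hji
    · exact hij
    · simpa [hY] using h.1 i
    · simpa [one_apply_ne hji.ne', hY] using h.2 i j hji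
  · simp [h.apply_eq_zero (lt_irrefl i)]
  · simp [one_apply_ne (Fin.ne_of_gt hji), h.apply_eq_zero (lt_asymm hji)]

theorem isLowerUnitri₄_one_add_iff {Y : Matrix (Fin m) (Fin m) K} :
    IsLowerUnitri₄ K (1 + Y) ↔ Y.IsSupportedOn (· > ·) := by
  refine ⟨fun h i j hY => ?_, fun h => ⟨fun i => ?_, fun i j hij => ?_⟩⟩
  · rcases lt_trichotomy i j with hij | rfl | hji
    · simpa [one_apply_ne hij.ne, hY] using h.2 i j hij
    · simpa [hY] using h.1 i
    · exact hji
  · simp [h.apply_eq_zero (lt_irrefl i)]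
  · simp [one_apply_ne (Fin.ne_of_lt hij), h.apply_eq_zero (lt_asymm hij)]

theorem IsLowerUnitri₄.isUnit {y : Matrix (Fin m) (Fin m) K} (hy : IsLowerUnitri₄ K y) :
    IsUnit y := by
  rw [isUnit_iff_isUnit_det, det_of_isLowerTriangular y fun i j hij => hy.2 i j hij]
  simp [hy.1]

end Unitriangular

section PermMatrix

variable {K : Type*} [Field K] {m : ℕ} (σ : Equiv.Perm (Fin m))

theorem permMat₄_eq_toMatrix : permMat₄ K σ = σ.symm.toPEquiv.toMatrix := by
  ext i j
  simp only [permMat₄, of_apply, PEquiv.toMatrix_apply, Equiv.toPEquiv_apply, Option.mem_def,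
    Option.some_inj, Equiv.symm_apply_eq]

theorem permMat₄_inv_mul_mul_permMat₄ (A : Matrix (Fin m) (Fin m) K) :
    permMat₄ K σ⁻¹ * A * permMat₄ K σ = A.submatrix σ σ := by
  rw [permMat₄_eq_toMatrix, permMat₄_eq_toMatrix, PEquiv.toMatrix_toPEquiv_mul,
    PEquiv.mul_toMatrix_toPEquiv]
  rfl

theorem permMat₄_inv_mul_one_add_mul_permMat₄ (X : Matrix (Fin m) (Fin m) K) :
    permMat₄ K σ⁻¹ * (1 + X) * permMat₄ K σ = 1 + X.submatrix σ σ := by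
  simp [permMat₄_inv_mul_mul_permMat₄, submatrix_add, submatrix_one_equiv]

theorem permMat₄_mul_one_add_mul_permMat₄_inv (X : Matrix (Fin m) (Fin m) K) :
    permMat₄ K σ * (1 + X) * permMat₄ K σ⁻¹ = 1 + X.submatrix ⇑σ⁻¹ ⇑σ⁻¹ := by
  simpa using permMat₄_inv_mul_one_add_mul_permMat₄ σ⁻¹ X

theorem permMat₄_mul_permMat₄_inv : permMat₄ K σ * permMat₄ K σ⁻¹ = 1 := by
  simpa using permMat₄_mul_one_add_mul_permMat₄_inv (K := K) σ 0

theorem isUnit_permMat₄ : IsUnit (permMat₄ K σ) :=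
  (isUnit_iff_isUnit_det _).2 (isUnit_det_of_right_inverse (permMat₄_mul_permMat₄_inv σ))

end PermMatrix

section Blocks

def InUpperRightBlock (a : ℕ) {m : ℕ} (i j : Fin m) : Prop :=
  (i : ℕ) < a ∧ a ≤ (j : ℕ)

theorem InUpperRightBlock.ne {a m : ℕ} {i j : Fin m} (h : InUpperRightBlock a i j) : i ≠ j := by
  rintro rfl
  exact absurd h.1 (not_lt.2 h.2)

theorem InUpperRightBlock.not_inUpperRightBlock {a m : ℕ} {i j k : Fin m}
    (h : InUpperRightBlock a i j) : ¬ InUpperRightBlock a j k :=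
  fun h' => absurd h'.1 (not_lt.2 h.2)

theorem Matrix.IsSupportedOn.one_add_mul_one_add {R : Type*} [Ring R] {a m : ℕ}
    {X Y : Matrix (Fin m) (Fin m) R} (hX : X.IsSupportedOn (InUpperRightBlock a))
    (hY : Y.IsSupportedOn (InUpperRightBlock a)) : (1 + X) * (1 + Y) = 1 + (X + Y) := by
  have hXY : X * Y = 0 :=
    hX.mul_eq_zero hY fun _ _ _ h => h.not_inUpperRightBlock
  rw [add_mul, mul_add, mul_add, hXY]
  noncomm_ring

variable {K : Type*} [Field K] {a b : ℕ}

theorem isBlockUpperUnip₄_iff {u : Matrix (Fin (a + b)) (Fin (a + b)) K} :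
    IsBlockUpperUnip₄ K a b u ↔ (u - 1).IsSupportedOn (InUpperRightBlock a) := by
  refine ⟨fun h i j hu => ?_, fun h => ⟨fun i => ?_, fun i j hne hij => ?_⟩⟩
  · by_contra hij
    rcases eq_or_ne i j with rfl | hne
    · simp [h.1] at hu
    · simp [one_apply_ne hne, h.2 i j hne hij] at hu
  · simpa [sub_eq_zero] using h.apply_eq_zero (i := i) (j := i) fun hii => hii.ne rfl
  · simpa [one_apply_ne hne] using h.apply_eq_zero hij

theorem isBlockLower_iff_blockTriangular {p : Matrix (Fin (a + b)) (Fin (a + b)) K} :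
    (∀ i j : Fin (a + b), (i : ℕ) < a → a ≤ (j : ℕ) → p i j = 0) ↔
      p.BlockTriangular fun i => (i : ℕ) < a := by
  refine ⟨fun h i j hji => ?_, fun h i j hi hj => h ?_⟩
  · obtain ⟨-, hij⟩ := lt_iff_le_not_ge.1 hji
    have hi : (i : ℕ) < a := by_contra fun hi => hij fun h => absurd h hi
    exact h i j hi (not_lt.1 fun hj => hij fun _ => hj)
  · exact lt_iff_le_not_ge.2 ⟨fun _ => hi, fun hle => absurd (hle hi) (not_lt.2 hj)⟩

theorem IsBlockLower₄.mul {p q : Matrix (Fin (a + b)) (Fin (a + b)) K}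
    (hp : IsBlockLower₄ K a b p) (hq : IsBlockLower₄ K a b q) : IsBlockLower₄ K a b (p * q) :=
  ⟨hp.1.mul hq.1, isBlockLower_iff_blockTriangular.2 <|
    (isBlockLower_iff_blockTriangular.1 hp.2).mul (isBlockLower_iff_blockTriangular.1 hq.2)⟩

theorem IsBlockLower₄.inv {p : Matrix (Fin (a + b)) (Fin (a + b)) K}
    (hp : IsBlockLower₄ K a b p) : IsBlockLower₄ K a b p⁻¹ := by
  have := p.invertibleOfIsUnitDet ((isUnit_iff_isUnit_det p).1 hp.1)
  exact ⟨isUnit_nonsing_inv_iff.2 hp.1, isBlockLower_iff_blockTriangular.2 <|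
    blockTriangular_inv_of_blockTriangular (isBlockLower_iff_blockTriangular.1 hp.2)⟩

theorem eq_of_mul_one_add_eq {q₁ q₂ Z₁ Z₂ : Matrix (Fin (a + b)) (Fin (a + b)) K}
    (hq₁ : IsBlockLower₄ K a b q₁) (hq₂ : IsBlockLower₄ K a b q₂)
    (hZ₁ : Z₁.IsSupportedOn (InUpperRightBlock a)) (hZ₂ : Z₂.IsSupportedOn (InUpperRightBlock a))
    (h : q₁ * (1 + Z₁) = q₂ * (1 + Z₂)) : Z₁ = Z₂ := by
  have hq : q₂⁻¹ * q₁ = 1 + (Z₂ + -Z₁) := calc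
    q₂⁻¹ * q₁ = q₂⁻¹ * (q₁ * (1 + Z₁)) * (1 + -Z₁) := by
      rw [mul_assoc q₂⁻¹, mul_assoc q₁, hZ₁.one_add_mul_one_add hZ₁.neg, add_neg_cancel,
        add_zero, mul_one]
    _ = (1 + Z₂) * (1 + -Z₁) := by
      rw [h, ← mul_assoc, nonsing_inv_mul _ ((isUnit_iff_isUnit_det _).1 hq₂.1), one_mul]
    _ = 1 + (Z₂ + -Z₁) := hZ₂.one_add_mul_one_add hZ₁.neg
  ext i j
  by_cases hij : InUpperRightBlock a i j
  · have h0 := (hq₂.inv.mul hq₁).2 i j hij.1 hij.2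
    rw [hq, Matrix.add_apply, one_apply_ne hij.ne, zero_add, Matrix.add_apply, neg_apply,
      add_neg_eq_zero] at h0
    exact h0.symm
  · rw [hZ₁.apply_eq_zero hij, hZ₂.apply_eq_zero hij]

end Blocks

section Factorization

variable {K : Type*} [Field K] {a b : ℕ}

theorem exists_isBlockLower₄_mul_one_add (σ : Equiv.Perm (Fin (a + b)))
    {Y : Matrix (Fin (a + b)) (Fin (a + b)) K} (hY : Y.IsSupportedOn fun i j => σ i < σ j) :
    ∃ q V, IsBlockLower₄ K a b q ∧ V.IsSupportedOn (InUpperRightBlock a) ∧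
      V.IsSupportedOn (fun i j => σ i < σ j) ∧ 1 + Y = q * (1 + V) := by
  -- Block elimination: writing `1 + Y = [[A, B], [C, E]]`, `D = [[A, 0], [C, E]]` and the
  -- upper-right block of `D⁻¹ (1 + Y)` is `A⁻¹ B`.
  set D := 1 + Y.restrict fun i j => ¬ InUpperRightBlock a i j
  have hDY : (Y.restrict fun i j => ¬ InUpperRightBlock a i j).IsSupportedOn
      fun i j => σ i < σ j :=
    (isSupportedOn_restrict hY).mono fun _ _ h => h.2
  have hD : IsUnit D.det := by rw [det_one_add_of_isSupportedOn σ hDY]; exact isUnit_one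
  have := D.invertibleOfIsUnitDet hD
  have hE : (D⁻¹ * (1 + Y)).BlockTriangular σ :=
    (blockTriangular_inv_of_blockTriangular (blockTriangular_one_add hDY)).mul
      (blockTriangular_one_add hY)
  set V := (D⁻¹ * (1 + Y)).restrict (InUpperRightBlock a)
  have hV : V.IsSupportedOn (InUpperRightBlock a) := fun i j hij =>
    by_contra fun h => hij (by simp [V, restrict, h])
  have hVσ : V.IsSupportedOn fun i j => σ i < σ j := by
    intro i j hij
    have hblock := hV i j hij
    refine lt_of_le_of_ne (not_lt.1 fun hji => hij ?_) (σ.injective.ne hblock.ne)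
    simp [V, restrict, hE hji]
  have hMV : ∀ i j, InUpperRightBlock a i j → ((1 + Y) * V) i j = (1 + Y) i j := by
    intro i j hij
    calc ((1 + Y) * V) i j = (D * (D⁻¹ * (1 + Y))) i j := by
          rw [mul_apply, mul_apply]
          refine Finset.sum_congr rfl fun k _ => ?_
          by_cases hk : (k : ℕ) < a
          · have hik : ¬ InUpperRightBlock a i k := fun h => absurd hk (not_lt.2 h.2)
            have hkj : InUpperRightBlock a k j := ⟨hk, hij.2⟩
            simp [D, V, restrict, hik, hkj]
          · have hik : InUpperRightBlock a i k := ⟨hij.1, not_lt.1 hk⟩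
            have hkj : ¬ InUpperRightBlock a k j := fun h => hk h.1
            simp [D, V, restrict, hik, hkj, one_apply_ne hik.ne]
      _ = (1 + Y) i j := by rw [← mul_assoc, mul_nonsing_inv _ hD, one_mul]
  have hYunit : IsUnit (1 + Y) := by
    rw [isUnit_iff_isUnit_det, det_one_add_of_isSupportedOn σ hY]; exact isUnit_one
  have hVunit : IsUnit (1 + -V) := by
    rw [isUnit_iff_isUnit_det]
    exact isUnit_det_of_right_inverse <| by
      rw [hV.neg.one_add_mul_one_add hV, neg_add_cancel, add_zero]
  refine ⟨(1 + Y) * (1 + -V), V, ⟨hYunit.mul hVunit, fun i j hi hj => ?_⟩, hV, hVσ, ?_⟩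
  · rw [mul_add, mul_one, mul_neg, Matrix.add_apply, neg_apply, hMV i j ⟨hi, hj⟩, add_neg_cancel]
  · rw [mul_assoc, hV.neg.one_add_mul_one_add hV, neg_add_cancel, add_zero, mul_one]

end Factorization

section Coordinates

variable {K : Type*} [Field K] {a b : ℕ} (σ : Equiv.Perm (Fin (a + b)))

theorem exists_mul_eq_mul_one_add_mul_permMat₄ {x y : Matrix (Fin (a + b)) (Fin (a + b)) K}
    (hx : ∃ p n, IsBlockLower₄ K a b p ∧ IsUpperUnitri₄ K n ∧ x = p * permMat₄ K σ * n)
    (hy : IsLowerUnitri₄ K y ∧ ∃ u, IsBlockUpperUnip₄ K a b u ∧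
      y = permMat₄ K σ⁻¹ * u * permMat₄ K σ) :
    ∃ q V X, IsBlockLower₄ K a b q ∧ V.IsSupportedOn (InUpperRightBlock a) ∧
      V.IsSupportedOn (fun i j => σ⁻¹ i < σ⁻¹ j) ∧ X.IsSupportedOn (InUpperRightBlock a) ∧
      X.IsSupportedOn (fun i j => σ⁻¹ j < σ⁻¹ i) ∧ y = 1 + X.submatrix σ σ ∧
      x * y = q * (1 + (V + X)) * permMat₄ K σ := by
  obtain ⟨p, n, hp, hn, rfl⟩ := hx
  obtain ⟨hy, u, hu, rfl⟩ := hy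
  obtain ⟨X, rfl⟩ : ∃ X, u = 1 + X := ⟨u - 1, by abel⟩
  obtain ⟨N, rfl⟩ : ∃ N, n = 1 + N := ⟨n - 1, by abel⟩
  rw [isBlockUpperUnip₄_iff, add_sub_cancel_left] at hu
  rw [isUpperUnitri₄_one_add_iff] at hn
  have hconj := permMat₄_inv_mul_one_add_mul_permMat₄ σ X
  rw [hconj, isLowerUnitri₄_one_add_iff, isSupportedOn_submatrix_iff] at hy
  have hN : (N.submatrix ⇑σ⁻¹ ⇑σ⁻¹).IsSupportedOn fun i j => σ⁻¹ i < σ⁻¹ j := by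
    rw [isSupportedOn_submatrix_iff]
    simpa using hn
  obtain ⟨q, V, hq, hV, hVσ, hqV⟩ := exists_isBlockLower₄_mul_one_add σ⁻¹ hN
  refine ⟨p * q, V, X, hp.mul hq, hV, hVσ, hu, hy, hconj, ?_⟩
  calc p * permMat₄ K σ * (1 + N) * (permMat₄ K σ⁻¹ * (1 + X) * permMat₄ K σ)
      = p * (permMat₄ K σ * (1 + N) * permMat₄ K σ⁻¹) * (1 + X) * permMat₄ K σ := by
        simp only [mul_assoc]
    _ = p * q * ((1 + V) * (1 + X)) * permMat₄ K σ := by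
        rw [permMat₄_mul_one_add_mul_permMat₄_inv, hqV]
        simp only [mul_assoc]
    _ = p * q * (1 + (V + X)) * permMat₄ K σ := by rw [hV.one_add_mul_one_add hu]

theorem exists_mul_eq_mul_mul_permMat₄ {p u : Matrix (Fin (a + b)) (Fin (a + b)) K}
    (hp : IsBlockLower₄ K a b p) (hu : IsBlockUpperUnip₄ K a b u) :
    ∃ x, (∃ p n, IsBlockLower₄ K a b p ∧ IsUpperUnitri₄ K n ∧ x = p * permMat₄ K σ * n) ∧
      ∃ y, (IsLowerUnitri₄ K y ∧ ∃ u, IsBlockUpperUnip₄ K a b u ∧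
        y = permMat₄ K σ⁻¹ * u * permMat₄ K σ) ∧ x * y = p * u * permMat₄ K σ := by
  obtain ⟨X, rfl⟩ : ∃ X, u = 1 + X := ⟨u - 1, by abel⟩
  rw [isBlockUpperUnip₄_iff, add_sub_cancel_left] at hu
  set Xup := X.restrict fun i j => σ⁻¹ i < σ⁻¹ j
  set Xlow := X.restrict fun i j => ¬ σ⁻¹ i < σ⁻¹ j
  have hup := isSupportedOn_restrict (r := fun i j => σ⁻¹ i < σ⁻¹ j) hu
  have hlow := isSupportedOn_restrict (r := fun i j => ¬ σ⁻¹ i < σ⁻¹ j) hu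
  refine ⟨p * permMat₄ K σ * (1 + Xup.submatrix σ σ), ⟨p, _, hp, ?_, rfl⟩,
    permMat₄ K σ⁻¹ * (1 + Xlow) * permMat₄ K σ, ⟨?_, 1 + Xlow, ?_, rfl⟩, ?_⟩
  · rw [isUpperUnitri₄_one_add_iff, isSupportedOn_submatrix_iff]
    exact hup.mono fun _ _ h => h.1
  · rw [permMat₄_inv_mul_one_add_mul_permMat₄, isLowerUnitri₄_one_add_iff,
      isSupportedOn_submatrix_iff]
    exact hlow.mono fun _ _ h => lt_of_le_of_ne (not_lt.1 h.1) (σ⁻¹.injective.ne h.2.ne.symm)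
  · rw [isBlockUpperUnip₄_iff, add_sub_cancel_left]
    exact hlow.mono fun _ _ h => h.2
  · calc p * permMat₄ K σ * (1 + Xup.submatrix σ σ) *
          (permMat₄ K σ⁻¹ * (1 + Xlow) * permMat₄ K σ)
        = p * (permMat₄ K σ * (1 + Xup.submatrix σ σ) * permMat₄ K σ⁻¹) * (1 + Xlow) *
            permMat₄ K σ := by
          simp only [mul_assoc]
      _ = p * ((1 + Xup) * (1 + Xlow)) * permMat₄ K σ := by
          rw [permMat₄_mul_one_add_mul_permMat₄_inv]
          simp [mul_assoc]
      _ = p * (1 + X) * permMat₄ K σ := by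
          rw [(hup.mono fun _ _ h => h.2).one_add_mul_one_add (hlow.mono fun _ _ h => h.2),
            restrict_add_restrict_not]

end Coordinates

theorem stmt_4_general (K : Type*) [Field K] (a b : ℕ) (σ : Equiv.Perm (Fin (a + b))) :
    Set.InjOn
      (fun x : Matrix (Fin (a + b)) (Fin (a + b)) K × Matrix (Fin (a + b)) (Fin (a + b)) K =>
        x.1 * x.2)
      ({x | ∃ p n, IsBlockLower₄ K a b p ∧ IsUpperUnitri₄ K n ∧
          x = p * permMat₄ K σ * n} ×ˢ
       {y | IsLowerUnitri₄ K y ∧ ∃ u, IsBlockUpperUnip₄ K a b u ∧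
          y = permMat₄ K σ⁻¹ * u * permMat₄ K σ}) ∧
    Set.image2 (· * ·)
      {x | ∃ p n, IsBlockLower₄ K a b p ∧ IsUpperUnitri₄ K n ∧
          x = p * permMat₄ K σ * n}
      {y | IsLowerUnitri₄ K y ∧ ∃ u, IsBlockUpperUnip₄ K a b u ∧
          y = permMat₄ K σ⁻¹ * u * permMat₄ K σ} =
      {z | ∃ p u, IsBlockLower₄ K a b p ∧ IsBlockUpperUnip₄ K a b u ∧
          z = p * u * permMat₄ K σ} := by
  refine ⟨?_, Set.Subset.antisymm ?_ ?_⟩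
  · rintro ⟨x₁, y₁⟩ ⟨hx₁, hy₁⟩ ⟨x₂, y₂⟩ ⟨hx₂, hy₂⟩ (h : x₁ * y₁ = x₂ * y₂)
    obtain ⟨q₁, V₁, X₁, hq₁, hV₁, hV₁σ, hX₁, hX₁σ, rfl, h₁⟩ :=
      exists_mul_eq_mul_one_add_mul_permMat₄ σ hx₁ hy₁
    obtain ⟨q₂, V₂, X₂, hq₂, hV₂, hV₂σ, hX₂, hX₂σ, rfl, h₂⟩ :=
      exists_mul_eq_mul_one_add_mul_permMat₄ σ hx₂ hy₂
    have hZ : V₁ + X₁ = V₂ + X₂ := eq_of_mul_one_add_eq hq₁ hq₂ (hV₁.add hX₁) (hV₂.add hX₂)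
      ((isUnit_permMat₄ σ).mul_right_cancel (h₁.symm.trans (h.trans h₂)))
    obtain rfl : X₁ = X₂ := hV₁σ.eq_of_add_eq hV₂σ hX₁σ hX₂σ (fun _ _ => lt_asymm) hZ
    exact Prod.ext (hy₁.1.isUnit.mul_right_cancel h) rfl
  · rintro _ ⟨x, hx, y, hy, rfl⟩
    obtain ⟨q, V, X, hq, hV, -, hX, -, -, h⟩ :=
      exists_mul_eq_mul_one_add_mul_permMat₄ σ hx hy
    refine ⟨q, 1 + (V + X), hq, ?_, h⟩
    rw [isBlockUpperUnip₄_iff, add_sub_cancel_left]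
    exact hV.add hX
  · rintro _ ⟨p, u, hp, hu, rfl⟩
    exact exists_mul_eq_mul_mul_permMat₄ σ hp hu

/-- Over a field `K`, if `σ⁻¹` is strictly increasing on each of the two
blocks, then the multiplication map `(x, y) ↦ x * y` from `(P̄ P_σ N) × (P_σ⁻¹ U P_σ ∩ N̄)`
is injective with image exactly `P̄ U P_σ`. -/
theorem stmt_4 (K : Type*) [Field K] (a b : ℕ) (σ : Equiv.Perm (Fin (a + b)))
    (h1 : StrictMonoOn (fun i => σ⁻¹ i) {i : Fin (a + b) | (i : ℕ) < a})
    (h2 : StrictMonoOn (fun i => σ⁻¹ i) {i : Fin (a + b) | a ≤ (i : ℕ)}) :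
    Set.InjOn
      (fun x : Matrix (Fin (a + b)) (Fin (a + b)) K × Matrix (Fin (a + b)) (Fin (a + b)) K =>
        x.1 * x.2)
      ({x | ∃ p n, IsBlockLower₄ K a b p ∧ IsUpperUnitri₄ K n ∧
          x = p * permMat₄ K σ * n} ×ˢ
       {y | IsLowerUnitri₄ K y ∧ ∃ u, IsBlockUpperUnip₄ K a b u ∧
          y = permMat₄ K σ⁻¹ * u * permMat₄ K σ}) ∧
    Set.image2 (· * ·)
      {x | ∃ p n, IsBlockLower₄ K a b p ∧ IsUpperUnitri₄ K n ∧
          x = p * permMat₄ K σ * n}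
      {y | IsLowerUnitri₄ K y ∧ ∃ u, IsBlockUpperUnip₄ K a b u ∧
          y = permMat₄ K σ⁻¹ * u * permMat₄ K σ} =
      {z | ∃ p u, IsBlockLower₄ K a b p ∧ IsBlockUpperUnip₄ K a b u ∧
          z = p * u * permMat₄ K σ} :=
  stmt_4_general K a b σ
end

section
/- Let 𝕜 be a complete nontrivially normed field, let V and W be Banach spaces over 𝕜, let g : V → W be a continuous surjective 𝕜-linear map, and let U = ker g with the norm induced from V. Then the induced sequence 0 → c₀(ℕ, U) → c₀(ℕ, V) → c₀(ℕ, W) → 0 of spaces of null sequences is exact: the first map is injective, its image equals the kernel of the second map, and the second map is surjective. In particular, every sequence in W converging to 0 lifts under g to a sequence in V converging to 0. -/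
open Filter Topology

/-! Exactness at `c₀(ℕ, U)` and `c₀(ℕ, V)` is formal, since `U` carries the subspace topology.
Surjectivity is the open mapping theorem: a surjection of Banach spaces has a (nonlinear) section
`s` with `‖s y‖ ≤ C * ‖y‖`, so `s ∘ w` is a null lift of a null sequence `w`. -/

theorem ContinuousLinearMap.exists_tendsto_zero_lift {𝕜 V W ι : Type*}
    [NontriviallyNormedField 𝕜] [NormedAddCommGroup V] [NormedSpace 𝕜 V] [CompleteSpace V]
    [NormedAddCommGroup W] [NormedSpace 𝕜 W] [CompleteSpace W]
    (g : V →L[𝕜] W) (hg : Function.Surjective g) {l : Filter ι} {w : ι → W}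
    (hw : Tendsto w l (𝓝 0)) : ∃ v : ι → V, Tendsto v l (𝓝 0) ∧ ∀ i, g (v i) = w i := by
  obtain ⟨C, -, hsection⟩ := g.exists_preimage_norm_le hg
  choose s hs hs_norm using hsection
  refine ⟨s ∘ w, ?_, fun i => hs (w i)⟩
  rw [tendsto_zero_iff_norm_tendsto_zero] at hw ⊢
  refine squeeze_zero (fun _ => norm_nonneg _) (fun i => hs_norm (w i)) ?_
  simpa using hw.const_mul C

theorem stmt_6_general (𝕜 : Type*) [NontriviallyNormedField 𝕜]
    (V W : Type*) [NormedAddCommGroup V] [NormedSpace 𝕜 V] [CompleteSpace V]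
    [NormedAddCommGroup W] [NormedSpace 𝕜 W] [CompleteSpace W]
    (g : V →L[𝕜] W) (hg : Function.Surjective g) :
    (Function.Injective
      (fun f : {f : ℕ → LinearMap.ker (g : V →ₗ[𝕜] W) // Tendsto f atTop (nhds 0)} =>
        (fun n => ((f.1 n : V)) : ℕ → V))) ∧
    (∀ v : ℕ → V, Tendsto v atTop (nhds 0) →
      ((∀ n, g (v n) = 0) ↔
        ∃ u : ℕ → LinearMap.ker (g : V →ₗ[𝕜] W), Tendsto u atTop (nhds 0) ∧ ∀ n, ((u n : V)) = v n)) ∧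
    (∀ w : ℕ → W, Tendsto w atTop (nhds 0) →
      ∃ v : ℕ → V, Tendsto v atTop (nhds 0) ∧ ∀ n, g (v n) = w n) := by
  refine ⟨fun f f' h => Subtype.ext (funext fun n => Subtype.ext (congrFun h n)),
    fun v hv => ⟨fun hker => ⟨fun n => ⟨v n, hker n⟩, tendsto_subtype_rng.mpr hv, fun _ => rfl⟩, ?_⟩,
    fun w hw => g.exists_tendsto_zero_lift hg hw⟩
  rintro ⟨u, -, hu⟩ n
  rw [← hu n]
  exact (u n).2

/-- Let `𝕜` be a complete nontrivially normed field, `V`, `W` Banach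
spaces over `𝕜`, `g : V → W` a continuous surjective linear map, and `U = ker g` with the
induced norm.  Then the induced sequence `0 → c₀(ℕ, U) → c₀(ℕ, V) → c₀(ℕ, W) → 0` of
spaces of null sequences is exact: the first map is injective, its image is the kernel of
the second, and the second is surjective (every null sequence in `W` lifts to a null
sequence in `V`). -/
theorem stmt_6 (𝕜 : Type*) [NontriviallyNormedField 𝕜] [CompleteSpace 𝕜]
    (V W : Type*) [NormedAddCommGroup V] [NormedSpace 𝕜 V] [CompleteSpace V]
    [NormedAddCommGroup W] [NormedSpace 𝕜 W] [CompleteSpace W]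
    (g : V →L[𝕜] W) (hg : Function.Surjective g) :
    (Function.Injective
      (fun f : {f : ℕ → LinearMap.ker (g : V →ₗ[𝕜] W) // Tendsto f atTop (nhds 0)} =>
        (fun n => ((f.1 n : V)) : ℕ → V))) ∧
    (∀ v : ℕ → V, Tendsto v atTop (nhds 0) →
      ((∀ n, g (v n) = 0) ↔
        ∃ u : ℕ → LinearMap.ker (g : V →ₗ[𝕜] W), Tendsto u atTop (nhds 0) ∧ ∀ n, ((u n : V)) = v n)) ∧
    (∀ w : ℕ → W, Tendsto w atTop (nhds 0) →
      ∃ v : ℕ → V, Tendsto v atTop (nhds 0) ∧ ∀ n, g (v n) = w n) :=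
  stmt_6_general 𝕜 V W g hg
end
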